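/- Let X ⊆ ℝ^m be nonempty, closed, and convex, and let c : ℝ^m → ℝ^m be continuous on X. If x* ∈ X is ⪯_c-minimal, then x* is a critical element of (X, c), i.e., ⟨x − x*, c(x*)⟩ ≥ 0 for all x ∈ X. -/

import Mathlib

open Set

noncomputable section

/-- The path point `y_ε = ε x + (1 - ε) y`. -/
def pathPt {m : ℕ} (x y : EuclideanSpace ℝ (Fin m)) (ε : ℝ) :
    EuclideanSpace ℝ (Fin m) :=
  ε • x + (1 - ε) • y

/-- The linear vector polyorder `x ⪯_c y`: for all `ε ∈ [0,1]`,
`⟨x, c(y_ε)⟩ ≤ ⟨y, c(y_ε)⟩`. -/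
def vecLe {m : ℕ} (c : EuclideanSpace ℝ (Fin m) → EuclideanSpace ℝ (Fin m))
    (x y : EuclideanSpace ℝ (Fin m)) : Prop :=
  ∀ ε ∈ Icc (0:ℝ) 1,
    (inner ℝ x (c (pathPt x y ε)) : ℝ) ≤ inner ℝ y (c (pathPt x y ε))

/-- The strict part `x ≺_c y` of the linear vector polyorder. -/
def vecLt {m : ℕ} (c : EuclideanSpace ℝ (Fin m) → EuclideanSpace ℝ (Fin m))
    (x y : EuclideanSpace ℝ (Fin m)) : Prop :=
  vecLe c x y ∧ ¬ vecLe c y x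

/-- `x*` is `⪯_c`-minimal in `X`: no element of `X` strictly dominates it. -/
def vecMinimal {m : ℕ} (X : Set (EuclideanSpace ℝ (Fin m)))
    (c : EuclideanSpace ℝ (Fin m) → EuclideanSpace ℝ (Fin m))
    (xs : EuclideanSpace ℝ (Fin m)) : Prop :=
  ∀ x ∈ X, ¬ vecLt c x xs

/-! If `⟨x - x*, c x*⟩ < 0`, continuity of `c` keeps the sign of `⟨x - x*, c z⟩` for `z` on a short
initial piece `[x*, y]` of the segment `[x*, x]`, with `y = x* + δ (x - x*) ∈ X`. As `y - x*` is a
positive multiple of `x - x*`, the point `y` then beats `x*` at every point of `[x*, y]`, which is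
`y ≺_c x*`. -/

open scoped Topology

lemma exists_Ioc_forall_Icc_lt_of_continuousWithinAt {f : ℝ → ℝ} {a b r : ℝ} (hab : a < b)
    (hf : ContinuousWithinAt f (Icc a b) a) (ha : f a < r) :
    ∃ δ ∈ Ioc a b, ∀ t ∈ Icc a δ, f t < r := by
  have hev : ∀ᶠ t in 𝓝[≥] a, f t < r := by
    rw [← nhdsWithin_Icc_eq_nhdsGE hab]
    exact hf.eventually_lt_const ha
  obtain ⟨u, hau, hu⟩ := mem_nhdsGE_iff_exists_Icc_subset.mp hev
  exact ⟨min u b, ⟨lt_min hau hab, min_le_right u b⟩,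
    fun t ht => hu ⟨ht.1, ht.2.trans (min_le_left u b)⟩⟩

section Polyorder

variable {m : ℕ} {c : EuclideanSpace ℝ (Fin m) → EuclideanSpace ℝ (Fin m)}

lemma pathPt_zero (x y : EuclideanSpace ℝ (Fin m)) : pathPt x y 0 = y := by
  simp [pathPt]

lemma pathPt_one (x y : EuclideanSpace ℝ (Fin m)) : pathPt x y 1 = x := by
  simp [pathPt]

lemma pathPt_add_smul (y d : EuclideanSpace ℝ (Fin m)) (δ ε : ℝ) :
    pathPt (y + δ • d) y ε = y + (ε * δ) • d := by
  simp only [pathPt]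
  module

lemma vecLe_iff {x y : EuclideanSpace ℝ (Fin m)} :
    vecLe c x y ↔ ∀ ε ∈ Icc (0:ℝ) 1, inner ℝ (x - y) (c (pathPt x y ε)) ≤ (0:ℝ) := by
  simp only [vecLe, inner_sub_left, sub_nonpos]

lemma not_vecLe_of_inner_sub_neg {x y : EuclideanSpace ℝ (Fin m)}
    (h : inner ℝ (x - y) (c x) < (0:ℝ)) : ¬ vecLe c y x := by
  intro hle
  have h0 := hle 0 ⟨le_rfl, zero_le_one⟩
  rw [pathPt_zero, ← sub_nonpos, ← inner_sub_left, ← neg_sub, inner_neg_left] at h0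
  linarith

lemma vecLt_of_forall_inner_sub_neg {x y : EuclideanSpace ℝ (Fin m)}
    (h : ∀ ε ∈ Icc (0:ℝ) 1, inner ℝ (x - y) (c (pathPt x y ε)) < (0:ℝ)) : vecLt c x y := by
  refine ⟨vecLe_iff.mpr fun ε hε => (h ε hε).le, not_vecLe_of_inner_sub_neg ?_⟩
  simpa only [pathPt_one] using h 1 ⟨zero_le_one, le_rfl⟩

end Polyorder

theorem vecMinimal_isCritical_general {m : ℕ} (X : Set (EuclideanSpace ℝ (Fin m)))
    (hXconv : Convex ℝ X)
    (c : EuclideanSpace ℝ (Fin m) → EuclideanSpace ℝ (Fin m)) (hc : ContinuousOn c X)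
    (xs : EuclideanSpace ℝ (Fin m)) (hxs : xs ∈ X)
    (hmin : vecMinimal X c xs) :
    ∀ x ∈ X, (0:ℝ) ≤ inner ℝ (x - xs) (c xs) := by
  intro x hx
  by_contra! hneg
  set seg : ℝ → EuclideanSpace ℝ (Fin m) := fun t => xs + t • (x - xs)
  have hsegX : MapsTo seg (Icc 0 1) X := fun t ht => hXconv.add_smul_sub_mem hxs hx ht
  set f : ℝ → ℝ := fun t => inner ℝ (x - xs) (c (seg t))
  have hf : ContinuousWithinAt f (Icc 0 1) 0 :=
    (continuousOn_const.inner (hc.comp (by fun_prop) hsegX)).continuousWithinAt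
      ⟨le_rfl, zero_le_one⟩
  obtain ⟨δ, ⟨hδ0, hδ1⟩, hfδ⟩ :=
    exists_Ioc_forall_Icc_lt_of_continuousWithinAt zero_lt_one hf (by simpa [f, seg] using hneg)
  refine hmin (seg δ) (hsegX ⟨hδ0.le, hδ1⟩) (vecLt_of_forall_inner_sub_neg fun ε hε => ?_)
  have hεδ : ε * δ ∈ Icc 0 δ :=
    ⟨mul_nonneg hε.1 hδ0.le, mul_le_of_le_one_left hδ0.le hε.2⟩
  calc inner ℝ (seg δ - xs) (c (pathPt (seg δ) xs ε))
      = δ * f (ε * δ) := by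
        simp only [seg, f, pathPt_add_smul, add_sub_cancel_left, real_inner_smul_left]
    _ < 0 := mul_neg_of_pos_of_neg hδ0 (hfδ _ hεδ)

/-- A `⪯_c`-minimal element is a critical element of `(X, c)`. -/
theorem vecMinimal_isCritical {m : ℕ} (X : Set (EuclideanSpace ℝ (Fin m)))
    (hXne : X.Nonempty) (hXcl : IsClosed X) (hXconv : Convex ℝ X)
    (c : EuclideanSpace ℝ (Fin m) → EuclideanSpace ℝ (Fin m)) (hc : ContinuousOn c X)
    (xs : EuclideanSpace ℝ (Fin m)) (hxs : xs ∈ X)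
    (hmin : vecMinimal X c xs) :
    ∀ x ∈ X, (0:ℝ) ≤ inner ℝ (x - xs) (c xs) :=
  vecMinimal_isCritical_general X hXconv c hc xs hxs hmin
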